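/- arXiv:2312.01419 — 5 statements merged into one kernel-verified Lean document; each statement's English description precedes it below -/
import Mathlib

section
/- For each integer k ≥ 2, let T be a tournament on vertex set {1, …, k} chosen uniformly at random (the orientation of each of the binom(k,2) edges is determined by an independent fair coin flip), and let r = ⌈12·log₂ k⌉. Then the probability that the set {1, …, r} is a signature of T tends to 1 as k tends to infinity. In particular, the probability that sig(T) ≤ ⌈12·log₂ k⌉ tends to 1 as k tends to infinity. -/
/-- A tournament: a directed graph in which, for every pair of distinct vertices,
exactly one of the two possible directed edges is present, and there are no loops. -/
def IsTournament {V : Type*} (r : V → V → Prop) : Prop :=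
  (∀ v, ¬ r v v) ∧ ∀ u v : V, u ≠ v → (r u v ↔ ¬ r v u)

/-- `R` is a signature of the tournament `t`: if `t'` is a tournament on the same
vertex set agreeing with `t` on all edges with an endpoint in `R` and reversing at
least one edge with both endpoints outside `R`, then `t'` is not isomorphic to `t`. -/
def IsSignature {V : Type*} (t : V → V → Prop) (R : Set V) : Prop :=
  ∀ t' : V → V → Prop, IsTournament t' →
    (∀ u v : V, u ∈ R ∨ v ∈ R → (t' u v ↔ t u v)) →
    (∃ u v : V, u ∉ R ∧ v ∉ R ∧ t u v ∧ ¬ t' u v) →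
    ¬ ∃ e : V ≃ V, ∀ u v : V, t u v ↔ t' (e u) (e v)

/-- `sig t` is the minimum size of a signature of `t`. -/
noncomputable def sig {V : Type*} (t : V → V → Prop) : ℕ :=
  sInf {n : ℕ | ∃ R : Set V, R.ncard = n ∧ IsSignature t R}

/-!
If `R` is not a signature of `T`, some permutation `g ≠ 1` of the vertices maps every edge of `T`
meeting `R` to an edge of `T`. Let `g` move `m` of the `k` vertices. Double counting shows that `g`
moves at least `|R| · min(m, k - 2) / 2` edges meeting `R`, and greedily one finds a third of them,
`Q`, with `Q` and `g • Q` disjoint. For `T` preserved by `g` the orientations on `g • Q` are forced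
by those on `Q`, so reversing any subset of `g • Q` is injective: the probability that `g`
preserves `T` on the edges meeting `R` is at most `2 ^ (-|Q|) ≤ k ^ (-(m + 2))` once
`|R| ≥ 12 log₂ k`. As at most `k ^ m` permutations move exactly `m` points, a union bound over `g`
gives failure probability at most `(k + 1) / k² ≤ 2 / k`.
-/

open Finset Filter Topology

theorem Equiv.Perm.exists_subset_apply_notMem {X : Type*} [DecidableEq X] (σ : Equiv.Perm X)
    (P : Finset X) (hP : ∀ p ∈ P, σ p ≠ p) :
    ∃ Q ⊆ P, (∀ q ∈ Q, σ q ∉ Q) ∧ #P ≤ 3 * #Q := by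
  induction P using Finset.strongInduction with
  | H P ih =>
  obtain rfl | ⟨p, hp⟩ := P.eq_empty_or_nonempty
  · exact ⟨∅, by simp⟩
  -- greedily keep `p` and discard its neighbours `σ p` and `σ⁻¹ p`
  obtain ⟨Q, hQ, hQσ, hcard⟩ := ih (P \ {p, σ p, σ.symm p})
    ((ssubset_iff_of_subset sdiff_subset).2 ⟨p, hp, by simp⟩)
    (fun q hq => hP q (mem_sdiff.1 hq).1)
  have hpQ (q : X) (hq : q ∈ Q) : q ≠ p ∧ q ≠ σ p ∧ q ≠ σ.symm p := by
    simpa using (mem_sdiff.1 (hQ hq)).2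
  refine ⟨insert p Q, insert_subset hp (hQ.trans sdiff_subset), ?_, ?_⟩
  · simp only [mem_insert, forall_eq_or_imp]
    refine ⟨not_or.2 ⟨hP p hp, fun h => (hpQ _ h).2.1 rfl⟩,
      fun q hq => not_or.2 ⟨?_, hQσ q hq⟩⟩
    rintro rfl
    exact (hpQ q hq).2.2 (by simp)
  · have := card_le_card_sdiff_add_card (s := P) (t := {p, σ p, σ.symm p})
    rw [card_insert_of_notMem fun h => (hpQ p h).1 rfl]
    have := card_le_three (a := p) (b := σ p) (c := σ.symm p)
    omega

theorem Equiv.Perm.card_filter_support_eq_le {α : Type*} [Fintype α] [DecidableEq α]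
    (s : Finset α) :
    #{g : Equiv.Perm α | g.support = s} ≤ (#s).factorial := by
  rw [← Fintype.card_subtype, ← Fintype.card_coe s, ← Fintype.card_perm,
    Fintype.card_congr (Equiv.Perm.subtypeEquivSubtypePerm (· ∈ s))]
  exact Fintype.card_le_of_injective
    (fun g => ⟨g.1, fun a ha => by rwa [← Equiv.Perm.notMem_support, g.2]⟩)
    fun _ _ e => Subtype.ext (congrArg (fun f => f.1) e :)

theorem Equiv.Perm.sum_inv_card_pow_card_support_le (α : Type*) [Fintype α] [DecidableEq α] :
    ∑ g : Equiv.Perm α, ((Fintype.card α : ℝ)⁻¹) ^ #g.support ≤ Fintype.card α + 1 := by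
  set n := Fintype.card α
  set x : ℝ := (n : ℝ)⁻¹
  calc ∑ g : Equiv.Perm α, x ^ #g.support
      = ∑ s : Finset α, #{g : Equiv.Perm α | g.support = s} • x ^ #s := by
        rw [← Finset.sum_fiberwise' univ Equiv.Perm.support fun s => x ^ #s]
        simp only [sum_const]
    _ ≤ ∑ s : Finset α, ((#s).factorial : ℝ) * x ^ #s := by
        gcongr with s
        rw [nsmul_eq_mul]
        gcongr
        exact_mod_cast Equiv.Perm.card_filter_support_eq_le s
    _ = ∑ m ∈ range (n + 1), n.choose m • ((m.factorial : ℝ) * x ^ m) := by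
        rw [← powerset_univ, sum_powerset_apply_card (fun m => (m.factorial : ℝ) * x ^ m),
          card_univ]
    _ ≤ ∑ m ∈ range (n + 1), (1 : ℝ) := by
        gcongr with m
        calc (n.choose m • ((m.factorial : ℝ) * x ^ m))
            = (n.descFactorial m : ℝ) * x ^ m := by
              rw [Nat.descFactorial_eq_factorial_mul_choose, nsmul_eq_mul]; push_cast; ring
          _ ≤ (n : ℝ) ^ m * x ^ m := by gcongr; exact_mod_cast Nat.descFactorial_le_pow n m
          _ = ((n : ℝ) * x) ^ m := (mul_pow ..).symm
          _ ≤ 1 := pow_le_one₀ (by positivity) mul_inv_le_one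
    _ = n + 1 := by simp

theorem pow_le_two_pow_of_logb_mul_le {n a b : ℕ} (h : Real.logb 2 n * a ≤ b) :
    n ^ a ≤ 2 ^ b := by
  rcases Nat.eq_zero_or_pos n with rfl | hn
  · exact (zero_pow_le_one a).trans Nat.one_le_two_pow
  have : (n : ℝ) ^ a ≤ 2 ^ b := by
    rw [← Real.rpow_logb (b := 2) (x := n) (by norm_num) (by norm_num) (by exact_mod_cast hn),
      ← Real.rpow_mul_natCast zero_le_two, ← Real.rpow_natCast 2 b]
    exact Real.rpow_le_rpow_of_exponent_le (by norm_num) h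
  exact_mod_cast this

theorem exists_perm_ne_one_of_not_isSignature {V : Type*} {t : V → V → Prop} {R : Set V}
    (h : ¬ IsSignature t R) :
    ∃ g : Equiv.Perm V, g ≠ 1 ∧
      ∀ u v, u ∈ R ∨ v ∈ R → (t (g u) (g v) ↔ t u v) := by
  simp only [IsSignature, not_forall, not_not] at h
  obtain ⟨t', -, hR, ⟨u, v, -, -, huv, hne⟩, e, he⟩ := h
  refine ⟨e.symm, fun h1 => hne ?_, fun x y hxy => ?_⟩
  · simpa [inv_eq_one.1 h1] using (he u v).1 huv
  · rw [he, Equiv.apply_symm_apply, Equiv.apply_symm_apply, hR x y hxy]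

section

variable {V : Type*}

abbrev IsBoolTournament (f : V → V → Bool) : Prop := IsTournament (fun i j => f i j = true)

theorem isBoolTournament_iff {f : V → V → Bool} :
    IsBoolTournament f ↔ (∀ v, f v v = false) ∧ ∀ u v, u ≠ v → f v u = !f u v := by
  refine and_congr (by simp) (forall₂_congr fun u v => imp_congr_right fun _ => ?_)
  show (f u v = true ↔ ¬ f v u = true) ↔ f v u = !f u v
  cases f u v <;> cases f v u <;> simp

theorem card_isBoolTournament_pos [Finite V] :
    0 < Nat.card {f : V → V → Bool // IsBoolTournament f} := by
  obtain ⟨n, ⟨e⟩⟩ := Finite.exists_equiv_fin V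
  refine Nat.card_pos_iff.2 ⟨⟨fun u v => decide (e u < e v),
    isBoolTournament_iff.2 ⟨by simp, fun u v huv => ?_⟩⟩, inferInstance⟩
  rcases lt_or_gt_of_ne (e.injective.ne huv) with h | h <;> simp [h, not_lt.2 h.le]

def PreservesEdgesMeeting (f : V → V → Bool) (g : Equiv.Perm V) (R : Set V) : Prop :=
  ∀ u v, u ∈ R ∨ v ∈ R → f (g u) (g v) = f u v

variable [DecidableEq V]

def reverseEdges (f : V → V → Bool) (E : Finset (Sym2 V)) (u v : V) : Bool :=
  f u v ^^ decide (s(u, v) ∈ E)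

theorem reverseEdges_reverseEdges (f : V → V → Bool) (E : Finset (Sym2 V)) :
    reverseEdges (reverseEdges f E) E = f := by
  funext u v
  simp [reverseEdges]

theorem IsBoolTournament.reverseEdges {f : V → V → Bool} (hf : IsBoolTournament f)
    {E : Finset (Sym2 V)} (hE : ∀ e ∈ E, ¬ e.IsDiag) :
    IsBoolTournament (reverseEdges f E) := by
  rw [isBoolTournament_iff] at hf ⊢
  refine ⟨fun v => ?_, fun u v huv => ?_⟩
  · have : s(v, v) ∉ E := fun h => hE _ h (Sym2.mk_isDiag_iff.2 rfl)
    simp [_root_.reverseEdges, hf.1, this]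
  · simp [_root_.reverseEdges, hf.2 u v huv, Sym2.eq_swap]

variable [Fintype V]

def movedEdgesMeeting (g : Equiv.Perm V) (R : Finset V) : Finset (Sym2 V) :=
  {e | ¬ e.IsDiag ∧ (∃ u ∈ R, u ∈ e) ∧ e.map g ≠ e}

theorem mk_mem_movedEdgesMeeting {g : Equiv.Perm V} {R : Finset V} {u v : V} (hu : u ∈ R)
    (huv : u ≠ v) (hfix : g u = u → g v ≠ v) (hswap : g u ≠ v) :
    s(u, v) ∈ movedEdgesMeeting g R := by
  simp only [movedEdgesMeeting, mem_filter, mem_univ, true_and, Sym2.mk_isDiag_iff, Sym2.map_mk,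
    Ne, Sym2.eq_iff]
  exact ⟨huv, ⟨u, hu, Sym2.mem_mk_left u v⟩, by tauto⟩

theorem card_mul_min_le_card_movedEdgesMeeting_mul_two (g : Equiv.Perm V) (R : Finset V) :
    #R * min #g.support (Fintype.card V - 2) ≤ #(movedEdgesMeeting g R) * 2 := by
  refine card_mul_le_card_mul (fun u e => u ∈ e) (fun u hu => ?_) (fun e _ => ?_)
  · obtain ⟨W, hW, hWmoved⟩ : ∃ W : Finset V, min #g.support (Fintype.card V - 2) ≤ #W ∧
        ∀ v ∈ W, s(u, v) ∈ movedEdgesMeeting g R := by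
      by_cases hgu : g u = u
      · refine ⟨g.support, min_le_left _ _, fun v hv => ?_⟩
        rw [Equiv.Perm.mem_support] at hv
        have huv : u ≠ v := by rintro rfl; exact hv hgu
        exact mk_mem_movedEdgesMeeting hu huv (fun _ => hv) (by rwa [hgu])
      · refine ⟨(univ.erase u).erase (g u), ?_, fun v hv => ?_⟩
        · have := pred_card_le_card_erase (s := univ.erase u) (a := g u)
          have := pred_card_le_card_erase (s := (univ : Finset V)) (a := u)
          rw [card_univ] at this
          omega
        · rw [mem_erase, mem_erase] at hv
          exact mk_mem_movedEdgesMeeting hu (Ne.symm hv.2.1) (absurd · hgu) (Ne.symm hv.1)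
    exact hW.trans (card_le_card_of_injOn (fun v => s(u, v))
      (fun v hv => mem_filter.2 ⟨hWmoved v hv, Sym2.mem_mk_left u v⟩)
      fun v _ w _ h => Sym2.congr_right.1 h)
  · induction e using Sym2.ind with
    | h x y =>
      exact (card_le_card fun u hu => by simp_all [bipartiteBelow]).trans
        (card_le_two (a := x) (b := y))

theorem mem_or_mem_of_mk_mem_movedEdgesMeeting {g : Equiv.Perm V} {R : Finset V} {u v : V}
    (h : s(u, v) ∈ movedEdgesMeeting g R) : u ∈ R ∨ v ∈ R := by
  obtain ⟨w, hw, hwe⟩ := (mem_filter.1 h).2.2.1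
  rcases Sym2.mem_iff.1 hwe with rfl | rfl <;> simp [hw]

section Reverse

variable {g : Equiv.Perm V} {R : Finset V} {Q : Finset (Sym2 V)}
  (hQ : Q ⊆ movedEdgesMeeting g R) (hQg : ∀ e ∈ Q, e.map g ∉ Q)
include hQ hQg

-- A preserved tournament is determined on `g • Q` by its values on `Q`, which reversing edges of
-- `g • Q` does not touch: this recovers first `f` on `Q`, then `B`, then `f`.
theorem eq_of_reverseEdges_image_eq {f f' : V → V → Bool} (hf : PreservesEdgesMeeting f g R)
    (hf' : PreservesEdgesMeeting f' g R) {B B' : Finset (Sym2 V)} (hB : B ⊆ Q) (hB' : B' ⊆ Q)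
    (h : reverseEdges f (B.image (Sym2.map g)) = reverseEdges f' (B'.image (Sym2.map g))) :
    f = f' ∧ B = B' := by
  have hgQ {u v : V} {C : Finset (Sym2 V)} (hC : C ⊆ Q) (huv : s(u, v) ∈ Q) :
      s(u, v) ∉ C.image (Sym2.map g) := by
    intro hmem
    obtain ⟨e, he, hge⟩ := mem_image.1 hmem
    exact hQg e (hC he) (hge ▸ huv)
  have heq_on_Q {u v : V} (huv : s(u, v) ∈ Q) : f u v = f' u v := by
    simpa [reverseEdges, hgQ hB huv, hgQ hB' huv] using congrFun (congrFun h u) v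
  have hBB : B = B' := by
    ext e
    induction e using Sym2.ind with
    | h u v =>
    by_cases huv : s(u, v) ∈ Q
    · have hmeet : u ∈ (R : Set V) ∨ v ∈ (R : Set V) := by
        simpa using mem_or_mem_of_mk_mem_movedEdgesMeeting (hQ huv)
      have := congrFun (congrFun h (g u)) (g v)
      simp only [reverseEdges, show s(g u, g v) = Sym2.map g s(u, v) from rfl,
        (Sym2.map.injective g.injective).mem_finset_image, hf u v hmeet, hf' u v hmeet,
        heq_on_Q huv] at this
      simpa using this
    · exact iff_of_false (fun h => huv (hB h)) (fun h => huv (hB' h))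
  subst hBB
  refine ⟨?_, rfl⟩
  rw [← reverseEdges_reverseEdges f (B.image (Sym2.map g)), h, reverseEdges_reverseEdges]

theorem card_preservesEdgesMeeting_mul_two_pow_le :
    Nat.card {f // IsBoolTournament f ∧ PreservesEdgesMeeting f g R} * 2 ^ #Q ≤
      Nat.card {f : V → V → Bool // IsBoolTournament f} := by
  rw [← card_powerset, ← Nat.card_eq_finsetCard, ← Nat.card_prod]
  refine Nat.card_le_card_of_injective
    (fun p => ⟨reverseEdges p.1.1 (p.2.1.image (Sym2.map g)), p.1.2.1.reverseEdges ?_⟩) ?_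
  · simp only [mem_image]
    rintro _ ⟨e, he, rfl⟩
    rw [Sym2.isDiag_map g.injective]
    exact (mem_filter.1 (hQ (mem_powerset.1 p.2.2 he))).2.1
  rintro ⟨⟨f, _, hf⟩, B, hB⟩ ⟨⟨f', _, hf'⟩, B', hB'⟩ h
  obtain ⟨rfl, rfl⟩ := eq_of_reverseEdges_image_eq hQ hQg hf hf' (mem_powerset.1 hB)
    (mem_powerset.1 hB') (congrArg Subtype.val h)
  rfl

end Reverse

theorem card_preservesEdgesMeeting_mul_pow_le {g : Equiv.Perm V} (hg : g ≠ 1) {R : Finset V}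
    (hV : 6 ≤ Fintype.card V) (hR : 12 * Real.logb 2 (Fintype.card V) ≤ #R) :
    Nat.card {f // IsBoolTournament f ∧ PreservesEdgesMeeting f g R} *
      Fintype.card V ^ (#g.support + 2) ≤
        Nat.card {f : V → V → Bool // IsBoolTournament f} := by
  set n := Fintype.card V
  set m := #g.support
  obtain ⟨Q, hQ, hQg, hPQ⟩ :=
    Equiv.Perm.exists_subset_apply_notMem
      (Equiv.ofBijective _ (Sym2.map.injective g.injective).bijective_of_finite)
      (movedEdgesMeeting g R) fun e he => (mem_filter.1 he).2.2.2
  refine le_trans (Nat.mul_le_mul_left _ (pow_le_two_pow_of_logb_mul_le ?_))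
    (card_preservesEdgesMeeting_mul_two_pow_le hQ hQg)
  have hm : 2 ≤ m := by
    by_contra
    exact hg (Equiv.Perm.card_support_le_one.1 (by omega))
  have hmn : m ≤ n := card_le_univ _
  have hRQ : #R * (m + 2) ≤ 12 * #Q := calc
    #R * (m + 2) ≤ #R * (2 * min m (n - 2)) := Nat.mul_le_mul_left _ (by omega)
    _ ≤ 2 * (#(movedEdgesMeeting g R) * 2) := by
      rw [mul_left_comm]
      exact Nat.mul_le_mul_left _ (card_mul_min_le_card_movedEdgesMeeting_mul_two g R)
    _ ≤ 12 * #Q := by omega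
  have hRQ' : (#R : ℝ) * (m + 2) ≤ 12 * #Q := by exact_mod_cast hRQ
  push_cast
  nlinarith

theorem card_not_isSignature_le (R : Finset V) :
    Nat.card {f : V → V → Bool //
        IsBoolTournament f ∧ ¬ IsSignature (fun i j => f i j = true) R} ≤
      ∑ g ∈ univ.erase 1,
        Nat.card {f : V → V → Bool // IsBoolTournament f ∧ PreservesEdgesMeeting f g R} := by
  classical
  simp only [Nat.card_eq_fintype_card, Fintype.card_subtype]
  refine (card_le_card fun f hf => ?_).trans card_biUnion_le
  obtain ⟨hf, hsig⟩ := (mem_filter.1 hf).2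
  obtain ⟨g, hg, hpres⟩ := exists_perm_ne_one_of_not_isSignature hsig
  exact mem_biUnion.2 ⟨g, mem_erase.2 ⟨hg, mem_univ g⟩,
    mem_filter.2 ⟨mem_univ f, hf, fun u v huv => Bool.eq_iff_iff.2 (hpres u v huv)⟩⟩

end

noncomputable def tournamentProportion (V : Type*) (P : (V → V → Bool) → Prop) : ℝ :=
  Nat.card {f : V → V → Bool // IsBoolTournament f ∧ P f} /
    Nat.card {f : V → V → Bool // IsBoolTournament f}

section

variable {V : Type*} [Fintype V]

theorem tournamentProportion_mono {P P' : (V → V → Bool) → Prop}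
    (h : ∀ f, IsBoolTournament f → P f → P' f) :
    tournamentProportion V P ≤ tournamentProportion V P' := by
  classical
  unfold tournamentProportion
  gcongr
  simp only [Nat.card_eq_fintype_card]
  exact Fintype.card_subtype_mono _ _ fun f hf => ⟨hf.1, h f hf.1 hf.2⟩

theorem tournamentProportion_le_one (P : (V → V → Bool) → Prop) :
    tournamentProportion V P ≤ 1 := by
  classical
  refine div_le_one_of_le₀ ?_ (Nat.cast_nonneg _)
  simp only [Nat.card_eq_fintype_card, Nat.cast_le]
  exact Fintype.card_subtype_mono _ _ fun f hf => hf.1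

theorem tournamentProportion_add_not (P : (V → V → Bool) → Prop) :
    tournamentProportion V P + tournamentProportion V (¬ P ·) = 1 := by
  classical
  rw [tournamentProportion, tournamentProportion, ← add_div,
    div_eq_one_iff_eq (by exact_mod_cast card_isBoolTournament_pos.ne')]
  simp only [Nat.card_eq_fintype_card, Fintype.card_subtype, ← filter_filter]
  norm_cast
  exact card_filter_add_card_filter_not _

end

section

variable {V : Type*} [Fintype V] [DecidableEq V] (R : Finset V) (hV : 6 ≤ Fintype.card V)
  (hR : 12 * Real.logb 2 (Fintype.card V) ≤ #R)
include hV hR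

theorem tournamentProportion_not_isSignature_le :
    tournamentProportion V (fun f => ¬ IsSignature (fun i j => f i j = true) R) ≤
      2 / Fintype.card V := by
  set n := Fintype.card V
  set N := Nat.card {f : V → V → Bool // IsBoolTournament f}
  have hn : (1 : ℝ) ≤ n := by exact_mod_cast (by omega : 1 ≤ n)
  rw [tournamentProportion, div_le_iff₀ (by exact_mod_cast card_isBoolTournament_pos)]
  calc
    _ ≤ ∑ g ∈ (univ : Finset (Equiv.Perm V)).erase 1,
        (Nat.card {f : V → V → Bool //
          IsBoolTournament f ∧ PreservesEdgesMeeting f g R} : ℝ) := by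
      exact_mod_cast card_not_isSignature_le R
    _ ≤ ∑ g ∈ (univ : Finset (Equiv.Perm V)).erase 1,
        N / n ^ 2 * (n : ℝ)⁻¹ ^ #g.support := by
      refine sum_le_sum fun g hg => ?_
      rw [inv_pow, ← div_eq_mul_inv, div_div, ← pow_add, add_comm,
        le_div_iff₀ (by positivity)]
      exact_mod_cast card_preservesEdgesMeeting_mul_pow_le (ne_of_mem_erase hg) hV hR
    _ ≤ ∑ g : Equiv.Perm V, N / n ^ 2 * (n : ℝ)⁻¹ ^ #g.support :=
      sum_le_sum_of_subset_of_nonneg (erase_subset _ _) fun _ _ _ => by positivity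
    _ ≤ N / n ^ 2 * (n + 1) := by
      rw [← mul_sum]
      gcongr
      exact Equiv.Perm.sum_inv_card_pow_card_support_le V
    _ ≤ 2 / n * N := by
      rw [div_mul_eq_mul_div, div_le_iff₀ (by positivity),
        show 2 / (n : ℝ) * N * n ^ 2 = N * (2 * n) by field_simp]
      gcongr
      linarith

theorem one_sub_two_div_le_tournamentProportion_isSignature :
    1 - 2 / Fintype.card V ≤
      tournamentProportion V fun f => IsSignature (fun i j => f i j = true) R := by
  linarith [tournamentProportion_add_not (V := V) fun f => IsSignature (fun i j => f i j = true) R,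
    tournamentProportion_not_isSignature_le R hV hR]

end

theorem one_sub_two_div_le_tournamentProportion_isSignature_fin {k r : ℕ} (hk : 6 ≤ k)
    (hr : 12 * Real.logb 2 k ≤ r) (hrk : r ≤ k) :
    1 - 2 / (k : ℝ) ≤ tournamentProportion (Fin k) fun f =>
      IsSignature (fun i j => f i j = true) {i : Fin k | i.val < r} := by
  have := one_sub_two_div_le_tournamentProportion_isSignature {i : Fin k | (i : ℕ) < r}
    (by simpa) (by rwa [Fin.card_filter_val_lt, Fintype.card_fin, min_eq_right hrk])
  simpa using this

theorem sig_le_ncard {V : Type*} {t : V → V → Prop} {R : Set V} (h : IsSignature t R) :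
    sig t ≤ R.ncard :=
  Nat.sInf_le ⟨R, rfl, h⟩

theorem ncard_setOf_val_lt_le (k r : ℕ) : {i : Fin k | i.val < r}.ncard ≤ r := by
  simp [Set.ncard_eq_toFinset_card', Fin.card_filter_val_lt]

theorem eventually_twelve_logb_le : ∀ᶠ n : ℕ in atTop, 12 * Real.logb 2 n ≤ n := by
  have hc : 0 < Real.log 2 / 12 := by positivity
  filter_upwards [tendsto_natCast_atTop_atTop.eventually (Real.isLittleO_log_id_atTop.bound hc),
    eventually_ge_atTop 1] with n hn hn1
  have hn1 : (1 : ℝ) ≤ n := by exact_mod_cast hn1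
  rw [Real.norm_of_nonneg (Real.log_nonneg hn1), id, Real.norm_of_nonneg (by linarith)] at hn
  rw [Real.logb, mul_div_assoc', div_le_iff₀ (Real.log_pos one_lt_two)]
  linarith

/-- Picking a tournament `T` on `{1,…,k}` (here `Fin k`, vertex `i` labeled `i+1`)
uniformly at random, the probability that `{1,…,r}` with `r = ⌈12·log₂ k⌉` is a
signature of `T` tends to `1` as `k → ∞`; in particular the probability that
`sig(T) ≤ ⌈12·log₂ k⌉` tends to `1`.  A uniformly random tournament is modeled by the
uniform distribution on the (finitely many) tournament relations on `Fin k`, which is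
the same as orienting each edge by an independent fair coin flip; probabilities are
counting ratios. -/
theorem stmt_2 :
    Filter.Tendsto (fun k : ℕ =>
      ((Nat.card {f : Fin k → Fin k → Bool //
          IsTournament (fun i j => f i j = true) ∧
          IsSignature (fun i j => f i j = true)
            {i : Fin k | i.val < ⌈(12 : ℝ) * Real.logb 2 (k : ℝ)⌉₊}}) : ℝ) /
      ((Nat.card {f : Fin k → Fin k → Bool //
          IsTournament (fun i j => f i j = true)}) : ℝ))
      Filter.atTop (nhds 1) ∧
    Filter.Tendsto (fun k : ℕ =>
      ((Nat.card {f : Fin k → Fin k → Bool //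
          IsTournament (fun i j => f i j = true) ∧
          sig (fun i j => f i j = true) ≤ ⌈(12 : ℝ) * Real.logb 2 (k : ℝ)⌉₊}) : ℝ) /
      ((Nat.card {f : Fin k → Fin k → Bool //
          IsTournament (fun i j => f i j = true)}) : ℝ))
      Filter.atTop (nhds 1) := by
  have hlower : Tendsto (fun k : ℕ => 1 - 2 / (k : ℝ)) atTop (𝓝 1) := by
    simpa using (tendsto_const_div_atTop_nhds_zero_nat (2 : ℝ)).const_sub 1
  have hsig : ∀ᶠ k : ℕ in atTop, 1 - 2 / (k : ℝ) ≤ tournamentProportion (Fin k) fun f =>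
      IsSignature (fun i j => f i j = true)
        {i : Fin k | i.val < ⌈(12 : ℝ) * Real.logb 2 (k : ℝ)⌉₊} := by
    filter_upwards [eventually_twelve_logb_le, eventually_ge_atTop 6] with k hlog hk
    exact one_sub_two_div_le_tournamentProportion_isSignature_fin hk (Nat.le_ceil _)
      (Nat.ceil_le.2 hlog)
  have hsig' : ∀ᶠ k : ℕ in atTop, 1 - 2 / (k : ℝ) ≤ tournamentProportion (Fin k) fun f =>
      sig (fun i j => f i j = true) ≤ ⌈(12 : ℝ) * Real.logb 2 (k : ℝ)⌉₊ :=
    hsig.mono fun k hk => hk.trans <| tournamentProportion_mono fun _ _ h =>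
      (sig_le_ncard h).trans (ncard_setOf_val_lt_le _ _)
  exact ⟨tendsto_of_tendsto_of_tendsto_of_le_of_le' hlower tendsto_const_nhds hsig
      (.of_forall fun _ => tournamentProportion_le_one _),
    tendsto_of_tendsto_of_tendsto_of_le_of_le' hlower tendsto_const_nhds hsig'
      (.of_forall fun _ => tournamentProportion_le_one _)⟩
end

section
/- Let T be a tournament on vertex set {1, …, k} such that {1, …, r} is a signature of T, where 1 ≤ r < k. Let G be an undirected simple graph whose vertex set is partitioned into parts V_{r+1}, …, V_k, and let u_1, …, u_r be r new distinct vertices, setting V_i = {u_i} for 1 ≤ i ≤ r. Let G* be any tournament on the union of V_1, …, V_k satisfying: for all i ≠ j and all x ∈ V_i, y ∈ V_j, (a) if i ≤ r or j ≤ r, then (x,y) is an edge of G* if and only if (i,j) is an edge of T; (b) if i > r and j > r, then (x,y) is an edge of G* if and only if either ((i,j) is an edge of T and xy is an edge of G) or ((j,i) is an edge of T and xy is not an edge of G). (Edges of G* inside a single part are arbitrary.) Then G* contains a copy of T with exactly one vertex in each of V_1, …, V_k if and only if G contains a clique on k − r vertices with exactly one vertex in each of V_{r+1}, …, V_k. 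-/
/-!
A transversal copy of `T` in `G*` pulls back along the choice of one vertex per part to a
tournament on the vertices of `T` that is isomorphic to `T`. By (a) it agrees with `T` on every
edge meeting `{1, …, r}`, so the signature property forces it to be `T` itself. By (b) an edge
between two parts beyond `r` agrees with `T` exactly when the two chosen vertices are adjacent
in `G`; hence the chosen vertices outside `u_1, …, u_r` form a transversal clique of `G`, and
conversely such a clique together with `u_1, …, u_r` spans a transversal copy of `T`.
-/

open Function

theorem IsTournament.comap {V W : Type*} {t : W → W → Prop} (ht : IsTournament t) {f : V → W}
    (hf : Injective f) : IsTournament fun u v => t (f u) (f v) :=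
  ⟨fun v => ht.1 (f v), fun _ _ huv => ht.2 _ _ (hf.ne huv)⟩

theorem IsTournament.iff_of_imp {V : Type*} {t t' : V → V → Prop} (ht : IsTournament t)
    (ht' : IsTournament t') (h : ∀ u v, t u v → t' u v) (u v : V) : t' u v ↔ t u v := by
  refine ⟨fun huv => ?_, h u v⟩
  have hne : u ≠ v := by rintro rfl; exact ht'.1 u huv
  by_contra hn
  exact (ht'.2 u v hne).1 huv (h v u ((ht.2 v u hne.symm).2 hn))

theorem IsSignature.iff_of_iso {V : Type*} {t t' : V → V → Prop} {R : Set V}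
    (hsig : IsSignature t R) (ht : IsTournament t) (ht' : IsTournament t')
    (hR : ∀ u v, u ≠ v → u ∈ R ∨ v ∈ R → (t' u v ↔ t u v))
    (e : V ≃ V) (he : ∀ u v, t u v ↔ t' (e u) (e v)) (u v : V) : t' u v ↔ t u v := by
  have hR' : ∀ u v, u ∈ R ∨ v ∈ R → (t' u v ↔ t u v) := by
    intro u v huv
    by_cases h : u = v
    · subst h; exact iff_of_false (ht'.1 u) (ht.1 u)
    · exact hR u v h huv
  refine ht.iff_of_imp ht' (fun u v huv => ?_) u v
  by_cases hu : u ∈ R ∨ v ∈ R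
  · exact (hR' u v hu).2 huv
  · push Not at hu
    by_contra hn
    exact hsig t' ht' hR' ⟨u, v, hu.1, hu.2, huv, hn⟩ ⟨e, he⟩

theorem exists_section_of_existsUnique {ι α : Type*} {P : α → ι} {s : Set α}
    (h : ∀ i, ∃! a, a ∈ s ∧ P a = i) :
    ∃ z : ι → α, (∀ i, P (z i) = i) ∧ Set.range z = s := by
  choose z hz hzu using h
  refine ⟨z, fun i => (hz i).2, Set.Subset.antisymm ?_ fun a ha => ?_⟩
  · rintro _ ⟨i, rfl⟩
    exact (hz i).1
  · exact ⟨P a, (hzu (P a) a ⟨ha, rfl⟩).symm⟩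

theorem existsUnique_mem_range_of_section {ι α : Type*} {P : α → ι} {z : ι → α}
    (hz : ∀ i, P (z i) = i) (i : ι) : ∃! a, a ∈ Set.range z ∧ P a = i := by
  refine ⟨z i, ⟨⟨i, rfl⟩, hz i⟩, ?_⟩
  rintro _ ⟨⟨j, rfl⟩, rfl⟩
  rw [hz]

theorem exists_equiv_range_iff {V α : Type*} (t : V → V → Prop) (t' : α → α → Prop) {z : V → α}
    (hz : Injective z) :
    (∃ e : V ≃ Set.range z, ∀ u v, t u v ↔ t' (e u) (e v)) ↔
      ∃ σ : V ≃ V, ∀ u v, t u v ↔ t' (z (σ u)) (z (σ v)) := by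
  have hzσ (e : V ≃ Set.range z) (u : V) :
      z ((e.trans (Equiv.ofInjective z hz).symm) u) = e u := by
    simp only [Equiv.trans_apply]
    exact congrArg Subtype.val ((Equiv.ofInjective z hz).apply_symm_apply (e u))
  constructor
  · rintro ⟨e, he⟩
    exact ⟨e.trans (Equiv.ofInjective z hz).symm, fun u v => by rw [hzσ, hzσ]; exact he u v⟩
  · rintro ⟨σ, hσ⟩
    exact ⟨σ.trans (Equiv.ofInjective z hz), hσ⟩

theorem SimpleGraph.exists_isNClique_transversal_iff {ι U : Type*} (G : SimpleGraph U)
    (Q : U → ι) (p : ι → Prop) [Fintype {i // p i}] :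
    (∃ s : Finset U, G.IsNClique (Fintype.card {i // p i}) s ∧
        ∀ i, p i → ∃! x, x ∈ s ∧ Q x = i) ↔
      ∃ x : {i // p i} → U, (∀ i, Q (x i) = i) ∧ Pairwise fun i j => G.Adj (x i) (x j) := by
  classical
  constructor
  · rintro ⟨s, hs, htr⟩
    choose x hx _ using fun i : {i // p i} => htr i i.2
    refine ⟨x, fun i => (hx i).2, fun i j hij => hs.1 (hx i).1 (hx j).1 fun h => hij ?_⟩
    exact Subtype.ext (by rw [← (hx i).2, ← (hx j).2, h])
  · rintro ⟨x, hxQ, hadj⟩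
    have hx : Injective x := fun i j h => Subtype.ext (by rw [← hxQ i, ← hxQ j, h])
    refine ⟨Finset.univ.image x, ⟨?_, ?_⟩, fun i hi => ⟨x ⟨i, hi⟩, ⟨?_, hxQ _⟩, ?_⟩⟩
    · simp only [Finset.coe_image, Finset.coe_univ, Set.image_univ]
      rintro _ ⟨a, rfl⟩ _ ⟨b, rfl⟩ hab
      exact hadj fun h => hab (congrArg x h)
    · rw [Finset.card_image_of_injective _ hx, Finset.card_univ]
    · exact Finset.mem_image_of_mem x (Finset.mem_univ _)
    · rintro _ ⟨hy, rfl⟩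
      obtain ⟨j, -, rfl⟩ := Finset.mem_image.1 hy
      exact congrArg x (Subtype.ext (hxQ j).symm)

theorem Fin.card_subtype_le_val (k r : ℕ) : Fintype.card {i : Fin k // r ≤ i.val} = k - r := by
  simp only [Fintype.card_subtype, ← not_lt, Finset.filter_not,
    Finset.card_sdiff_of_subset (Finset.filter_subset _ _), Fin.card_filter_val_lt,
    Finset.card_univ, Fintype.card_fin]
  omega

section BlowUp

variable {U : Type*} {k r : ℕ} {t : Fin k → Fin k → Prop} {G : SimpleGraph U} {Q : U → Fin k}
  {tstar : Fin r ⊕ U → Fin r ⊕ U → Prop} {P : Fin r ⊕ U → Fin k}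

theorem orient_iff_adj (ht : IsTournament t)
    (hb : ∀ x y : U, Q x ≠ Q y → (tstar (Sum.inr x) (Sum.inr y) ↔
      ((t (Q x) (Q y) ∧ G.Adj x y) ∨ (t (Q y) (Q x) ∧ ¬ G.Adj x y))))
    {x y : U} (hxy : Q x ≠ Q y) :
    (tstar (Sum.inr x) (Sum.inr y) ↔ t (Q x) (Q y)) ↔ G.Adj x y := by
  have := ht.2 _ _ hxy.symm
  have := hb x y hxy
  tauto

theorem orient_iff_of_lt
    (ha : ∀ x y : Fin r ⊕ U, P x ≠ P y → ((P x).val < r ∨ (P y).val < r) →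
      (tstar x y ↔ t (P x) (P y)))
    {z : Fin k → Fin r ⊕ U} (hz : ∀ i, P (z i) = i) {i j : Fin k} (hij : i ≠ j)
    (h : i.val < r ∨ j.val < r) : tstar (z i) (z j) ↔ t i j := by
  simpa only [hz] using ha (z i) (z j) (by simpa only [hz]) (by simpa only [hz])

theorem exists_eq_inr_of_le (hP : ∀ a : Fin r, (P (Sum.inl a)).val < r) {z : Fin r ⊕ U}
    (hz : r ≤ (P z).val) : ∃ x, z = Sum.inr x := by
  rcases z with a | x
  · exact absurd (hP a) (not_lt.2 hz)
  · exact ⟨x, rfl⟩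

/-- The transversal consisting of `u_1, …, u_r` and the vertices `x i` in the parts beyond `r`. -/
def liftTransversal (x : {i : Fin k // r ≤ i.val} → U) (i : Fin k) : Fin r ⊕ U :=
  if h : i.val < r then Sum.inl ⟨i.val, h⟩ else Sum.inr (x ⟨i, not_lt.1 h⟩)

theorem part_liftTransversal (hrk : r < k)
    (hP1 : ∀ i : Fin r, P (Sum.inl i) = ⟨i.val, lt_trans i.isLt hrk⟩)
    (hP2 : ∀ x : U, P (Sum.inr x) = Q x) {x : {i : Fin k // r ≤ i.val} → U}
    (hx : ∀ i, Q (x i) = i) (i : Fin k) : P (liftTransversal x i) = i := by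
  unfold liftTransversal
  split_ifs
  · rw [hP1]
  · rw [hP2, hx]

theorem liftTransversal_orient_iff (ht : IsTournament t) (htstar : IsTournament tstar)
    (ha : ∀ x y : Fin r ⊕ U, P x ≠ P y → ((P x).val < r ∨ (P y).val < r) →
      (tstar x y ↔ t (P x) (P y)))
    (hb : ∀ x y : U, Q x ≠ Q y → (tstar (Sum.inr x) (Sum.inr y) ↔
      ((t (Q x) (Q y) ∧ G.Adj x y) ∨ (t (Q y) (Q x) ∧ ¬ G.Adj x y))))
    {x : {i : Fin k // r ≤ i.val} → U} (hx : ∀ i, Q (x i) = i)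
    (hxP : ∀ i, P (liftTransversal x i) = i) (hadj : Pairwise fun i j => G.Adj (x i) (x j))
    (i j : Fin k) : tstar (liftTransversal x i) (liftTransversal x j) ↔ t i j := by
  by_cases hij : i = j
  · subst hij
    exact iff_of_false (htstar.1 _) (ht.1 i)
  by_cases h : i.val < r ∨ j.val < r
  · exact orient_iff_of_lt ha hxP hij h
  push Not at h
  have hlift (i : Fin k) (hi : r ≤ i.val) : liftTransversal x i = Sum.inr (x ⟨i, hi⟩) := by
    simp [liftTransversal, not_lt.2 hi]
  have hQ : Q (x ⟨i, h.1⟩) ≠ Q (x ⟨j, h.2⟩) := by rwa [hx, hx]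
  have := (orient_iff_adj ht hb hQ).2 (hadj fun hij' => hij (congrArg Subtype.val hij'))
  rwa [hx, hx, ← hlift, ← hlift] at this

end BlowUp

theorem stmt_6_general {U : Type*} (k r : ℕ) (hrk : r < k)
    (t : Fin k → Fin k → Prop) (ht : IsTournament t)
    (hsig : IsSignature t {i : Fin k | i.val < r})
    (G : SimpleGraph U)
    (Q : U → Fin k)
    (tstar : (Fin r ⊕ U) → (Fin r ⊕ U) → Prop) (htstar : IsTournament tstar)
    (P : (Fin r ⊕ U) → Fin k)
    (hP1 : ∀ i : Fin r, P (Sum.inl i) = ⟨i.val, lt_trans i.isLt hrk⟩)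
    (hP2 : ∀ x : U, P (Sum.inr x) = Q x)
    (ha : ∀ x y : Fin r ⊕ U, P x ≠ P y → ((P x).val < r ∨ (P y).val < r) →
      (tstar x y ↔ t (P x) (P y)))
    (hb : ∀ x y : U, Q x ≠ Q y →
      (tstar (Sum.inr x) (Sum.inr y) ↔
        ((t (Q x) (Q y) ∧ G.Adj x y) ∨ (t (Q y) (Q x) ∧ ¬ G.Adj x y)))) :
    (∃ s : Set (Fin r ⊕ U), (∀ i : Fin k, ∃! z : Fin r ⊕ U, z ∈ s ∧ P z = i) ∧
        ∃ e : Fin k ≃ s, ∀ i j : Fin k, t i j ↔ tstar (e i) (e j)) ↔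
    (∃ s : Finset U, G.IsNClique (k - r) s ∧
        ∀ i : Fin k, r ≤ i.val → ∃! x : U, x ∈ s ∧ Q x = i) := by
  rw [← Fin.card_subtype_le_val, G.exists_isNClique_transversal_iff]
  constructor
  · rintro ⟨s, hs, e, he⟩
    obtain ⟨z, hzP, rfl⟩ := exists_section_of_existsUnique hs
    have hz : Injective z := LeftInverse.injective hzP
    obtain ⟨σ, hσ⟩ := (exists_equiv_range_iff t tstar hz).1 ⟨e, he⟩
    have hcopy : ∀ i j, tstar (z i) (z j) ↔ t i j :=
      hsig.iff_of_iso ht (htstar.comap hz) (fun _ _ => orient_iff_of_lt ha hzP) σ hσ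
    choose x hx using fun i : {i : Fin k // r ≤ i.val} =>
      exists_eq_inr_of_le (fun a => by simp [hP1]) ((hzP i).symm ▸ i.2)
    have hxQ (i : {i : Fin k // r ≤ i.val}) : Q (x i) = i := by rw [← hP2, ← hx, hzP]
    refine ⟨x, hxQ, fun i j hij => (orient_iff_adj ht hb ?_).1 ?_⟩
    · rw [hxQ, hxQ]; exact Subtype.coe_ne_coe.2 hij
    · rw [← hx, ← hx, hxQ, hxQ]; exact hcopy i j
  · rintro ⟨x, hxQ, hadj⟩
    have hc := part_liftTransversal hrk hP1 hP2 hxQ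
    refine ⟨_, existsUnique_mem_range_of_section hc,
      (exists_equiv_range_iff t tstar (LeftInverse.injective hc)).2 ⟨Equiv.refl _, fun i j =>
        (liftTransversal_orient_iff ht htstar ha hb hxQ hc hadj i j).symm⟩⟩

/-- Let `T` (relation `t` on `Fin k`, vertex `i` labeled `i+1`) be a tournament whose
first `r` vertices `{1,…,r}` form a signature, `1 ≤ r < k`.  Let `G` be an undirected
graph on `U` with vertex set partitioned (via `Q`) into parts `V_{r+1}, …, V_k`, and add
`r` new vertices `u_1, …, u_r` (the summand `Fin r`), with `V_i = {u_i}` for `i ≤ r`;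
the part of a vertex of `Fin r ⊕ U` is given by `P`.  Let `G*` (relation `tstar`) be any
tournament on `Fin r ⊕ U` such that for vertices in distinct parts `i ≠ j`:
(a) if `i ≤ r` or `j ≤ r` the edge is oriented according to `T`;
(b) otherwise it is oriented according to `T` when the pair is an edge of `G` and
opposite to `T` when it is not.  (Edges within a part are arbitrary.)
Then `G*` contains a copy of `T` with exactly one vertex in each of `V_1, …, V_k` iff
`G` contains a clique on `k - r` vertices with exactly one vertex in each of
`V_{r+1}, …, V_k`. -/
theorem stmt_6 {U : Type*} (k r : ℕ) (hr1 : 1 ≤ r) (hrk : r < k)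
    (t : Fin k → Fin k → Prop) (ht : IsTournament t)
    (hsig : IsSignature t {i : Fin k | i.val < r})
    (G : SimpleGraph U)
    (Q : U → Fin k) (hQ : ∀ x : U, r ≤ (Q x).val)
    (tstar : (Fin r ⊕ U) → (Fin r ⊕ U) → Prop) (htstar : IsTournament tstar)
    (P : (Fin r ⊕ U) → Fin k)
    (hP1 : ∀ i : Fin r, P (Sum.inl i) = ⟨i.val, lt_trans i.isLt hrk⟩)
    (hP2 : ∀ x : U, P (Sum.inr x) = Q x)
    (ha : ∀ x y : Fin r ⊕ U, P x ≠ P y → ((P x).val < r ∨ (P y).val < r) →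
      (tstar x y ↔ t (P x) (P y)))
    (hb : ∀ x y : U, Q x ≠ Q y →
      (tstar (Sum.inr x) (Sum.inr y) ↔
        ((t (Q x) (Q y) ∧ G.Adj x y) ∨ (t (Q y) (Q x) ∧ ¬ G.Adj x y)))) :
    (∃ s : Set (Fin r ⊕ U), (∀ i : Fin k, ∃! z : Fin r ⊕ U, z ∈ s ∧ P z = i) ∧
        ∃ e : Fin k ≃ s, ∀ i j : Fin k, t i j ↔ tstar (e i) (e j)) ↔
    (∃ s : Finset U, G.IsNClique (k - r) s ∧
        ∀ i : Fin k, r ≤ i.val → ∃! x : U, x ∈ s ∧ Q x = i) :=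
  stmt_6_general k r hrk t ht hsig G Q tstar htstar P hP1 hP2 ha hb
end

section
/- Every undirected simple graph on n vertices with at least n + 1 edges contains a path with three edges (a path on four vertices). -/
/-!
In a graph without a path on four vertices, every edge `bc` can be charged to a vertex: to an
endpoint whose only neighbour is the other endpoint if there is one, and otherwise to a common
neighbour of `b` and `c`, which exists because a neighbour `x ≠ c` of `b` and a neighbour `y ≠ b`
of `c` must coincide (else `x b c y` is a path). Such a common neighbour `v` has no neighbours
outside `{b, c}`, so it determines the edge; hence the charging is injective and there are at most
as many edges as vertices.
-/

namespace SimpleGraph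

variable {V : Type*} {G : SimpleGraph V}

/-- A walk `a b c d` with `a ≠ c` and `b ≠ d` is a path unless `a = d`, so this says that `G`
contains no path with three edges. -/
def PathThreeFree (G : SimpleGraph V) : Prop :=
  ∀ ⦃a b c d : V⦄, G.Adj a b → G.Adj b c → G.Adj c d → a ≠ c → b ≠ d → a = d

def IsAnchor (G : SimpleGraph V) (e : Sym2 V) (v : V) : Prop :=
  (∃ u, e = s(v, u) ∧ ∀ w, G.Adj v w → w = u) ∨ ∀ w ∈ e, G.Adj v w

lemma PathThreeFree.exists_isAnchor (hG : G.PathThreeFree) {e : Sym2 V} (he : e ∈ G.edgeSet) :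
    ∃ v, G.IsAnchor e v := by
  induction e using Sym2.ind with
  | _ b c =>
  rw [mem_edgeSet] at he
  by_cases hb : ∀ w, G.Adj b w → w = c
  · exact ⟨b, .inl ⟨c, rfl, hb⟩⟩
  by_cases hc : ∀ w, G.Adj c w → w = b
  · exact ⟨c, .inl ⟨b, Sym2.eq_swap, hc⟩⟩
  push Not at hb hc
  obtain ⟨x, hbx, hxc⟩ := hb
  obtain ⟨y, hcy, hyb⟩ := hc
  obtain rfl : x = y := hG hbx.symm he hcy hxc hyb.symm
  refine ⟨x, .inr ?_⟩
  rintro w hw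
  rcases Sym2.mem_iff.1 hw with rfl | rfl
  exacts [hbx.symm, hcy.symm]

lemma PathThreeFree.mem_of_adj_of_forall_adj (hG : G.PathThreeFree) {e : Sym2 V}
    (he : e ∈ G.edgeSet) {v x : V} (hv : ∀ w ∈ e, G.Adj v w) (hvx : G.Adj v x) : x ∈ e := by
  induction e using Sym2.ind with
  | _ b c =>
  have hvb := hv b (Sym2.mem_mk_left b c)
  have hvc := hv c (Sym2.mem_mk_right b c)
  exact Sym2.mem_iff.2 <| or_iff_not_imp_left.2 fun hxb => hG hvx.symm hvb he hxb hvc.ne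

lemma not_forall_mem_adj_of_forall_adj_eq {e : Sym2 V} (he : e ∈ G.edgeSet) {v u : V}
    (hu : ∀ w, G.Adj v w → w = u) : ¬∀ w ∈ e, G.Adj v w := by
  induction e using Sym2.ind with
  | _ b c =>
  intro hv
  have hb := hu b (hv b (Sym2.mem_mk_left b c))
  have hc := hu c (hv c (Sym2.mem_mk_right b c))
  exact G.ne_of_adj he (hb.trans hc.symm)

lemma PathThreeFree.eq_of_isAnchor (hG : G.PathThreeFree) {e₁ e₂ : Sym2 V}
    (h₁ : e₁ ∈ G.edgeSet) (h₂ : e₂ ∈ G.edgeSet) {v : V}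
    (a₁ : G.IsAnchor e₁ v) (a₂ : G.IsAnchor e₂ v) : e₁ = e₂ := by
  rcases a₁ with ⟨u₁, rfl, hu₁⟩ | hv₁ <;> rcases a₂ with ⟨u₂, rfl, hu₂⟩ | hv₂
  · rw [hu₂ u₁ h₁]
  · exact absurd hv₂ (not_forall_mem_adj_of_forall_adj_eq h₂ hu₁)
  · exact absurd hv₁ (not_forall_mem_adj_of_forall_adj_eq h₁ hu₂)
  · induction e₂ using Sym2.ind with
    | _ b c =>
    have hbc : b ≠ c := G.ne_of_adj h₂
    rw [← Sym2.mem_and_mem_iff hbc]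
    exact ⟨hG.mem_of_adj_of_forall_adj h₁ hv₁ (hv₂ b (Sym2.mem_mk_left b c)),
      hG.mem_of_adj_of_forall_adj h₁ hv₁ (hv₂ c (Sym2.mem_mk_right b c))⟩

lemma PathThreeFree.card_edgeSet_le [Finite V] (hG : G.PathThreeFree) :
    Nat.card G.edgeSet ≤ Nat.card V := by
  choose f hf using fun e : G.edgeSet => hG.exists_isAnchor e.2
  refine Nat.card_le_card_of_injective f fun e₁ e₂ h => Subtype.ext ?_
  exact hG.eq_of_isAnchor e₁.2 e₂.2 (hf e₁) (h ▸ hf e₂)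

end SimpleGraph

/-- Every undirected simple graph on `n` vertices with at least `n + 1` edges contains
a path with three edges, i.e. four distinct vertices `a, b, c, d` with `ab`, `bc`, `cd`
all edges. -/
theorem stmt_8 {V : Type*} [Fintype V] (G : SimpleGraph V)
    (h : Fintype.card V + 1 ≤ Nat.card G.edgeSet) :
    ∃ a b c d : V, a ≠ b ∧ a ≠ c ∧ a ≠ d ∧ b ≠ c ∧ b ≠ d ∧ c ≠ d ∧
      G.Adj a b ∧ G.Adj b c ∧ G.Adj c d := by
  by_contra hP
  have hG : G.PathThreeFree := fun a b c d hab hbc hcd hac hbd => by_contra fun had =>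
    hP ⟨a, b, c, d, hab.ne, hac, had, hbc.ne, hbd, hcd.ne, hab, hbc, hcd⟩
  rw [← Nat.card_eq_fintype_card] at h
  have := hG.card_edgeSet_le
  omega
end

section
/- Let a, b, c, d be four distinct vertices and suppose orientations are fixed arbitrarily for each of the three pairs {a,c}, {a,d}, {b,d}. Then the remaining three pairs {a,b}, {b,c}, {c,d} can be oriented so that the resulting tournament on {a,b,c,d} is isomorphic to D. -/
/-- The tournament `D` on four vertices: vertex `0` is a source dominating the
directed triangle `1 → 2 → 3 → 1`. -/
def Drel : Fin 4 → Fin 4 → Prop := fun i j =>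
  (i = 0 ∧ j ≠ 0) ∨ (i = 1 ∧ j = 2) ∨ (i = 2 ∧ j = 3) ∨ (i = 3 ∧ j = 1)

instance : DecidableRel Drel := fun i j => by unfold Drel; infer_instance

theorem isTournament_Drel : IsTournament Drel := by
  unfold IsTournament; decide

theorem IsTournament.comap_s10 {V W : Type*} {r : W → W → Prop} (hr : IsTournament r)
    {f : V → W} (hf : Function.Injective f) : IsTournament fun x y => r (f x) (f y) :=
  ⟨fun v => hr.1 (f v), fun _ _ huv => hr.2 _ _ (hf.ne huv)⟩

theorem exists_perm_Drel_path (oac oad obd : Bool) : ∃ τ : Equiv.Perm (Fin 4),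
    (Drel (τ 0) (τ 2) ↔ oac = true) ∧ (Drel (τ 0) (τ 3) ↔ oad = true) ∧
      (Drel (τ 1) (τ 3) ↔ obd = true) := by
  revert oac oad obd; decide

theorem injective_vec_four {V : Type*} {a b c d : V}
    (hab : a ≠ b) (hac : a ≠ c) (had : a ≠ d) (hbc : b ≠ c) (hbd : b ≠ d) (hcd : c ≠ d) :
    Function.Injective ![a, b, c, d] := by
  simp only [Matrix.vecCons, Fin.cons_injective_iff]
  simp [*, Function.injective_of_subsingleton]

/-- Let `a, b, c, d` be four distinct vertices and fix arbitrary orientations (the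
booleans `oac, oad, obd`) for the pairs `{a,c}`, `{a,d}`, `{b,d}`.  Then the remaining
pairs `{a,b}`, `{b,c}`, `{c,d}` can be oriented so that the resulting tournament on
`{a,b,c,d}` is isomorphic to `D`. -/
theorem stmt_10 (a b c d : Fin 4)
    (hab : a ≠ b) (hac : a ≠ c) (had : a ≠ d) (hbc : b ≠ c) (hbd : b ≠ d) (hcd : c ≠ d)
    (oac oad obd : Bool) :
    ∃ t : Fin 4 → Fin 4 → Prop, IsTournament t ∧
      (t a c ↔ oac = true) ∧ (t a d ↔ oad = true) ∧ (t b d ↔ obd = true) ∧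
      ∃ e : Fin 4 ≃ Fin 4, ∀ i j : Fin 4, Drel i j ↔ t (e i) (e j) := by
  obtain ⟨τ, hac', had', hbd'⟩ := exists_perm_Drel_path oac oad obd
  let E : Fin 4 ≃ Fin 4 := Equiv.ofBijective ![a, b, c, d]
    (Finite.injective_iff_bijective.mp (injective_vec_four hab hac had hbc hbd hcd))
  have hE : E.symm a = 0 ∧ E.symm b = 1 ∧ E.symm c = 2 ∧ E.symm d = 3 := by
    simp only [Equiv.symm_apply_eq]; exact ⟨rfl, rfl, rfl, rfl⟩
  let σ := E.symm.trans τ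
  refine ⟨fun x y => Drel (σ x) (σ y), isTournament_Drel.comap_s10 σ.injective, ?_, ?_, ?_,
    σ.symm, fun i j => by simp⟩ <;>
  simpa only [σ, Equiv.trans_apply, hE]
end

section
/- Let H_8 denote the (unique up to isomorphism) tournament on five vertices a, b, c, d, e with edges including (e,a), (e,b), (c,e), (d,e), (a,c), (a,d), (b,c), (b,d). Let G be a tournament. Then the number of copies of H_8 in G equals the sum over all vertices v of G of the number of pairs (P, Q) where P is a 2-element subset of the out-neighborhood of v, Q is a 2-element subset of the in-neighborhood of v, and every vertex of P dominates every vertex of Q. -/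
/-- The number of copies of the tournament `t` (on vertex type `W`) in the tournament `r`
(on vertex type `V`): the number of vertex subsets of `V` whose induced subtournament is
isomorphic to `t`. -/
noncomputable def CopyCount {V W : Type*} (r : V → V → Prop) (t : W → W → Prop) : ℕ :=
  Nat.card {s : Set V // ∃ e : W ≃ s, ∀ i j : W, t i j ↔ r (e i) (e j)}

/-- The tournament `H₈` on five vertices `a = 0, b = 1, c = 2, d = 3, e = 4`, with edges
`(e,a), (e,b), (c,e), (d,e), (a,c), (a,d), (b,c), (b,d)` together with `(a,b)` and
`(c,d)` (any choice of orientation of the last two pairs yields an isomorphic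
tournament). -/
def H8rel : Fin 5 → Fin 5 → Prop := fun i j =>
  (i = 4 ∧ j = 0) ∨ (i = 4 ∧ j = 1) ∨ (i = 2 ∧ j = 4) ∨ (i = 3 ∧ j = 4) ∨
  (i = 0 ∧ j = 2) ∨ (i = 0 ∧ j = 3) ∨ (i = 1 ∧ j = 2) ∨ (i = 1 ∧ j = 3) ∨
  (i = 0 ∧ j = 1) ∨ (i = 2 ∧ j = 3)

/-!
A vertex `v` together with a pair `P` of out-neighbours and a pair `Q` of in-neighbours such
that `P` dominates `Q` (a *star*) spans a copy of `H₈` with `v` in the role of `e`: the obvious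
map from `H₈` is a homomorphism of tournaments, hence an embedding. Conversely every copy arises
this way, from exactly one star. The centre is unique because two centres `v → v'` of the same
five-set are impossible: `v` would be an in-neighbour of `v'`, forcing the out-pair of `v'` to be
the in-pair of `v`, and then the other in-neighbour of `v'` lies in the out-pair of `v`, which
creates a 2-cycle with the in-pair of `v`.
-/

namespace IsTournament

variable {V W : Type*} {r : V → V → Prop} {t : W → W → Prop}

lemma ne_of_rel (hr : IsTournament r) {x y : V} (h : r x y) : x ≠ y := by
  rintro rfl
  exact hr.1 x h

lemma not_rel_of_rel (hr : IsTournament r) {x y : V} (h : r x y) : ¬ r y x :=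
  (hr.2 x y (hr.ne_of_rel h)).mp h

lemma rel_or_rel (hr : IsTournament r) {x y : V} (h : x ≠ y) : r x y ∨ r y x :=
  (em (r y x)).symm.imp_left ((hr.2 x y h).mpr)

lemma exists_oriented_of_card_eq_two [DecidableEq V] (hr : IsTournament r) {P : Finset V}
    (hP : P.card = 2) : ∃ x y, P = {x, y} ∧ r x y := by
  obtain ⟨x, y, hxy, rfl⟩ := Finset.card_eq_two.mp hP
  rcases hr.rel_or_rel hxy with h | h
  · exact ⟨x, y, rfl, h⟩
  · exact ⟨y, x, Finset.pair_comm x y, h⟩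

lemma injective_of_hom (ht : IsTournament t) (hr : IsTournament r) {f : W → V}
    (hf : ∀ i j, t i j → r (f i) (f j)) : Function.Injective f := by
  intro i j hij
  by_contra hne
  rcases ht.rel_or_rel hne with h | h
  · exact hr.ne_of_rel (hf i j h) hij
  · exact hr.ne_of_rel (hf j i h) hij.symm

lemma rel_iff_of_hom (ht : IsTournament t) (hr : IsTournament r) {f : W → V}
    (hf : ∀ i j, t i j → r (f i) (f j)) (i j : W) : t i j ↔ r (f i) (f j) := by
  refine ⟨hf i j, fun h => ?_⟩
  have hij : i ≠ j := fun hij => hr.ne_of_rel h (congrArg f hij)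
  exact ((ht.rel_or_rel hij).resolve_right fun h' => hr.not_rel_of_rel h (hf j i h'))

lemma exists_copy_of_hom (ht : IsTournament t) (hr : IsTournament r) {f : W → V}
    (hf : ∀ i j, t i j → r (f i) (f j)) {s : Set V} (hs : Set.range f = s) :
    ∃ e : W ≃ s, ∀ i j, t i j ↔ r (e i) (e j) := by
  subst hs
  exact ⟨Equiv.ofInjective f (ht.injective_of_hom hr hf), ht.rel_iff_of_hom hr hf⟩

end IsTournament

lemma isTournament_H8rel : IsTournament H8rel := by
  unfold IsTournament H8rel
  decide

section Star

variable {V : Type*} {r : V → V → Prop}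

def IsStar (r : V → V → Prop) (v : V) (P Q : Finset V) : Prop :=
  P.card = 2 ∧ Q.card = 2 ∧ (∀ x ∈ P, r v x) ∧ (∀ y ∈ Q, r y v) ∧ ∀ x ∈ P, ∀ y ∈ Q, r x y

def starSet (v : V) (P Q : Finset V) : Set V := insert v ((P : Set V) ∪ Q)

namespace IsStar

variable {v v' : V} {P Q P' Q' : Finset V}

lemma coe_out_eq (hr : IsTournament r) (h : IsStar r v P Q) :
    (P : Set V) = {x ∈ starSet v P Q | r v x} := by
  obtain ⟨-, -, hvP, hQv, -⟩ := h
  ext x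
  simp only [starSet, Set.mem_insert_iff, Set.mem_union, Finset.mem_coe]
  refine ⟨fun hx => ⟨Or.inr (Or.inl hx), hvP x hx⟩, ?_⟩
  rintro ⟨rfl | hx | hx, hvx⟩
  · exact absurd hvx (hr.1 x)
  · exact hx
  · exact absurd hvx (hr.not_rel_of_rel (hQv x hx))

lemma coe_in_eq (hr : IsTournament r) (h : IsStar r v P Q) :
    (Q : Set V) = {x ∈ starSet v P Q | r x v} := by
  obtain ⟨-, -, hvP, hQv, -⟩ := h
  ext x
  simp only [starSet, Set.mem_insert_iff, Set.mem_union, Finset.mem_coe]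
  refine ⟨fun hx => ⟨Or.inr (Or.inr hx), hQv x hx⟩, ?_⟩
  rintro ⟨rfl | hx | hx, hxv⟩
  · exact absurd hxv (hr.1 x)
  · exact absurd hxv (hr.not_rel_of_rel (hvP x hx))
  · exact hx

lemma not_rel_center (hr : IsTournament r) (h : IsStar r v P Q) (h' : IsStar r v' P' Q')
    (hS : starSet v P Q = starSet v' P' Q') : ¬ r v v' := by
  intro hvv'
  have ⟨_, hQ, _, _, hPQ⟩ := h
  have ⟨hP', hQ', _, _, hPQ'⟩ := h'
  have hvQ' : v ∈ Q' := by
    have hv : v ∈ starSet v' P' Q' := hS ▸ Set.mem_insert v _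
    exact Finset.mem_coe.mp (h'.coe_in_eq hr ▸ ⟨hv, hvv'⟩)
  have hP'Q : P' = Q := by
    refine Finset.eq_of_subset_of_card_le (fun x hx => ?_) (by rw [hQ, hP'])
    have hxS : x ∈ starSet v P Q := hS ▸ Or.inr (Or.inl hx)
    exact Finset.mem_coe.mp (h.coe_in_eq hr ▸ ⟨hxS, hPQ' x hx v hvQ'⟩)
  obtain ⟨y, hyQ', hyv⟩ := Finset.exists_mem_ne (by rw [hQ']; norm_num) v
  obtain ⟨x, hxQ⟩ := Finset.card_pos.mp (by rw [hQ]; norm_num : 0 < Q.card)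
  have hyS : y ∈ starSet v P Q := hS ▸ Or.inr (Or.inr hyQ')
  rcases hyS with rfl | hyP | hyQ
  · exact hyv rfl
  · exact hr.not_rel_of_rel (hPQ y hyP x hxQ) (hPQ' x (hP'Q ▸ hxQ) y hyQ')
  · exact hr.1 y (hPQ' y (hP'Q ▸ hyQ) y hyQ')

lemma eq_of_starSet_eq (hr : IsTournament r) (h : IsStar r v P Q) (h' : IsStar r v' P' Q')
    (hS : starSet v P Q = starSet v' P' Q') : v = v' ∧ P = P' ∧ Q = Q' := by
  obtain rfl : v = v' := by
    by_contra hne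
    rcases hr.rel_or_rel hne with hvv' | hv'v
    · exact h.not_rel_center hr h' hS hvv'
    · exact h'.not_rel_center hr h hS.symm hv'v
  refine ⟨rfl, Finset.coe_injective ?_, Finset.coe_injective ?_⟩
  · rw [h.coe_out_eq hr, h'.coe_out_eq hr, hS]
  · rw [h.coe_in_eq hr, h'.coe_in_eq hr, hS]

lemma exists_copy_H8rel (hr : IsTournament r) (h : IsStar r v P Q) :
    ∃ e : Fin 5 ≃ starSet v P Q, ∀ i j, H8rel i j ↔ r (e i) (e j) := by
  classical
  obtain ⟨hPcard, hQcard, hvP, hQv, hPQ⟩ := h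
  obtain ⟨p₀, p₁, rfl, hp⟩ := hr.exists_oriented_of_card_eq_two hPcard
  obtain ⟨q₀, q₁, rfl, hq⟩ := hr.exists_oriented_of_card_eq_two hQcard
  simp only [Finset.mem_insert, Finset.mem_singleton, forall_eq_or_imp, forall_eq]
    at hvP hQv hPQ
  refine isTournament_H8rel.exists_copy_of_hom hr (f := ![p₀, p₁, q₀, q₁, v]) ?_ ?_
  · intro i j hij
    fin_cases i <;> fin_cases j <;> simp [H8rel] at hij ⊢ <;> tauto
  · ext x
    simp only [starSet, Matrix.range_cons, Matrix.range_empty, Set.union_empty,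
      Set.union_singleton, Set.union_insert, Set.mem_insert_iff, Set.mem_singleton_iff,
      Finset.coe_insert, Finset.coe_singleton]
    tauto

end IsStar

lemma exists_isStar_of_copy_H8rel {s : Set V} (e : Fin 5 ≃ s)
    (he : ∀ i j, H8rel i j ↔ r (e i) (e j)) :
    ∃ v P Q, IsStar r v P Q ∧ starSet v P Q = s := by
  classical
  have hrel : ∀ i j, H8rel i j → r (e i) (e j) := fun i j => (he i j).mp
  have hne : ∀ i j, i ≠ j → (e i : V) ≠ e j := fun i j hij h =>
    hij (e.injective (Subtype.val_injective h))
  refine ⟨e 4, {(e 0 : V), (e 1 : V)}, {(e 2 : V), (e 3 : V)},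
    ⟨Finset.card_pair (hne 0 1 (by decide)), Finset.card_pair (hne 2 3 (by decide)),
      ?_, ?_, ?_⟩, ?_⟩
  · simp only [Finset.mem_insert, Finset.mem_singleton, forall_eq_or_imp, forall_eq]
    exact ⟨hrel 4 0 (by simp [H8rel]), hrel 4 1 (by simp [H8rel])⟩
  · simp only [Finset.mem_insert, Finset.mem_singleton, forall_eq_or_imp, forall_eq]
    exact ⟨hrel 2 4 (by simp [H8rel]), hrel 3 4 (by simp [H8rel])⟩
  · simp only [Finset.mem_insert, Finset.mem_singleton, forall_eq_or_imp, forall_eq]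
    exact ⟨⟨hrel 0 2 (by simp [H8rel]), hrel 0 3 (by simp [H8rel])⟩,
      hrel 1 2 (by simp [H8rel]), hrel 1 3 (by simp [H8rel])⟩
  · ext x
    refine ⟨?_, fun hx => ?_⟩
    · simp only [starSet, Finset.coe_pair, Set.mem_insert_iff, Set.mem_union,
        Set.mem_singleton_iff]
      rintro (rfl | (rfl | rfl) | rfl | rfl) <;> exact Subtype.property _
    · obtain ⟨i, rfl⟩ : ∃ i, (e i : V) = x := ⟨e.symm ⟨x, hx⟩, by simp⟩
      fin_cases i <;> simp [starSet]

end Star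

/-- The number of copies of `H₈` in a tournament `G` equals the sum, over all vertices
`v`, of the number of pairs `(P, Q)` where `P` is a 2-element subset of the
out-neighborhood of `v`, `Q` is a 2-element subset of the in-neighborhood of `v`, and
every vertex of `P` dominates every vertex of `Q`. -/
theorem stmt_19 {V : Type*} [Fintype V] (r : V → V → Prop) (hr : IsTournament r) :
    CopyCount r H8rel =
      ∑ v : V, Nat.card {PQ : Finset V × Finset V //
        PQ.1.card = 2 ∧ PQ.2.card = 2 ∧
        (∀ x ∈ PQ.1, r v x) ∧ (∀ y ∈ PQ.2, r y v) ∧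
        ∀ x ∈ PQ.1, ∀ y ∈ PQ.2, r x y} := by
  let toCopy : (Σ v, {PQ : Finset V × Finset V // IsStar r v PQ.1 PQ.2}) →
      {s : Set V // ∃ e : Fin 5 ≃ s, ∀ i j, H8rel i j ↔ r (e i) (e j)} :=
    fun ⟨v, ⟨(P, Q), h⟩⟩ => ⟨starSet v P Q, h.exists_copy_H8rel hr⟩
  have hinj : Function.Injective toCopy := by
    rintro ⟨v, ⟨⟨P, Q⟩, h⟩⟩ ⟨v', ⟨⟨P', Q'⟩, h'⟩⟩ heq
    obtain ⟨rfl, rfl, rfl⟩ := h.eq_of_starSet_eq hr h' (congrArg Subtype.val heq)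
    rfl
  have hsurj : Function.Surjective toCopy := by
    rintro ⟨s, e, he⟩
    obtain ⟨v, P, Q, h, rfl⟩ := exists_isStar_of_copy_H8rel e he
    exact ⟨⟨v, ⟨(P, Q), h⟩⟩, rfl⟩
  rw [CopyCount, ← Nat.card_congr (Equiv.ofBijective toCopy ⟨hinj, hsurj⟩), Nat.card_sigma]
  rfl
end
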